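/- arXiv:math/0701217 — 2 statements merged into one kernel-verified Lean document; each statement's English description precedes it below -/
import Mathlib

section
/- Let A and H be Lie coalgebras over a field k with cobrackets δ_A: A → A ⊗ A and δ_H: H → H ⊗ H, A a left H-comodule via φ: A → H ⊗ A and H a right A-comodule via ψ: H → H ⊗ A, satisfying the co-matched pair conditions (CM1) and (CM2). Then D = A ⊕ H with cobracket δ_D(a) = δ_A(a) + φ(a) − τ(φ(a)) and δ_D(x) = δ_H(x) + ψ(x) − τ(ψ(x)) (where τ is the flip) is a Lie coalgebra, i.e. δ_D is anti-cosymmetric and satisfies the co-Jacobi identity (1 + ξ + ξ²)(δ_D ⊗ id)δ_D = 0, where ξ is the cyclic permutation of three tensor factors. -/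
/-!
Precompose with the two inclusions `A → A × H` and `H → A × H`. On each of them the co-Jacobiator
of `δ_D` splits along the factor patterns of `(D ⊗ D) ⊗ D`. The cyclic sum `1 + ξ + ξ²` is
invariant under `ξ`, so the three cyclic rotations of a mixed pattern (say `H A A`, `A H A`,
`A A H`) can all be rotated into one of them: the co-Jacobiator becomes the cyclic sum of four
maps, valued in `(A ⊗ A) ⊗ A`, `(H ⊗ H) ⊗ H`, `(H ⊗ A) ⊗ A` and `(H ⊗ H) ⊗ A`. The first two
vanish by co-Jacobi for `A` and `H`; after moving the permutations past `φ`, `ψ`, `δ_A`, `δ_H`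
by naturality, the `HAA` part is (CM1) on `A` and the comodule axiom for `ψ` on `H`, and the
`HHA` part is the comodule axiom for `φ` on `A` and (CM2) on `H`.
-/

open TensorProduct

noncomputable section

/-- The flip `τ : M ⊗ M → M ⊗ M`. -/
def flipT (k M : Type*) [Field k] [AddCommGroup M] [Module k M] :
    M ⊗[k] M →ₗ[k] M ⊗[k] M := (TensorProduct.comm k M M).toLinearMap

/-- The cyclic permutation `ξ : (a ⊗ b) ⊗ c ↦ (c ⊗ a) ⊗ b`. -/
def cyc (k M : Type*) [Field k] [AddCommGroup M] [Module k M] :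
    (M ⊗[k] M) ⊗[k] M →ₗ[k] (M ⊗[k] M) ⊗[k] M :=
  ((TensorProduct.comm k (M ⊗[k] M) M).trans
    (TensorProduct.assoc k M M M).symm).toLinearMap

/-- A Lie coalgebra structure: anti-cosymmetry and the co-Jacobi identity. -/
def IsLieCoalg (k M : Type*) [Field k] [AddCommGroup M] [Module k M]
    (δ : M →ₗ[k] M ⊗[k] M) : Prop :=
  ((LinearMap.id + flipT k M) ∘ₗ δ = 0) ∧
  ((LinearMap.id + cyc k M + cyc k M ∘ₗ cyc k M) ∘ₗ (δ.rTensor M) ∘ₗ δ = 0)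

namespace TensorProduct

section CommSemiring

variable {R : Type*} [CommSemiring R] {M N P X : Type*}
  [AddCommMonoid M] [Module R M] [AddCommMonoid N] [Module R N]
  [AddCommMonoid P] [Module R P] [AddCommMonoid X] [Module R X]

def cycHet (R M N P : Type*) [CommSemiring R] [AddCommMonoid M] [Module R M]
    [AddCommMonoid N] [Module R N] [AddCommMonoid P] [Module R P] :
    (M ⊗[R] N) ⊗[R] P →ₗ[R] (P ⊗[R] M) ⊗[R] N :=
  ((TensorProduct.comm R (M ⊗[R] N) P).trans (TensorProduct.assoc R P M N).symm).toLinearMap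

lemma cycHet_comp_cycHet_comp_cycHet :
    cycHet R N P M ∘ₗ cycHet R P M N ∘ₗ cycHet R M N P = LinearMap.id :=
  ext_threefold fun _ _ _ => rfl

lemma cycHet_rTensor_comm (f : X →ₗ[R] M ⊗[R] N) (u : P ⊗[R] X) :
    cycHet R M N P (f.rTensor P (TensorProduct.comm R P X u)) =
      (TensorProduct.assoc R P M N).symm (f.lTensor P u) := by
  rw [LinearMap.rTensor_comm]
  exact congr($(ext_threefold'
    (g := cycHet R M N P ∘ₗ (TensorProduct.comm R P (M ⊗[R] N)).toLinearMap)
    (h := (TensorProduct.assoc R P M N).symm.toLinearMap) fun _ _ _ => rfl) _)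

lemma cycHet_cycHet_rTensor_comm (u : (M ⊗[R] N) ⊗[R] P) :
    cycHet R P N M (cycHet R N M P ((TensorProduct.comm R M N).toLinearMap.rTensor P u)) =
      (TensorProduct.assoc R M P N).symm
        ((TensorProduct.comm R N P).toLinearMap.lTensor M (TensorProduct.assoc R M N P u)) :=
  congr($(ext_threefold
    (g := cycHet R P N M ∘ₗ cycHet R N M P ∘ₗ (TensorProduct.comm R M N).toLinearMap.rTensor P)
    (h := (TensorProduct.assoc R M P N).symm.toLinearMap ∘ₗ
      (TensorProduct.comm R N P).toLinearMap.lTensor M ∘ₗ (TensorProduct.assoc R M N P).toLinearMap)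
    fun _ _ _ => rfl) u)

lemma cycHet_cycHet_rTensor_comm_rTensor_comm (f : X →ₗ[R] M ⊗[R] N) (u : P ⊗[R] X) :
    cycHet R P N M (cycHet R N M P ((TensorProduct.comm R M N).toLinearMap.rTensor P
      (f.rTensor P (TensorProduct.comm R P X u)))) =
      (TensorProduct.comm R P M).toLinearMap.rTensor N
        ((TensorProduct.assoc R P M N).symm (f.lTensor P u)) := by
  rw [LinearMap.rTensor_comm]
  exact congr($(ext_threefold'
    (g := cycHet R P N M ∘ₗ cycHet R N M P ∘ₗ (TensorProduct.comm R M N).toLinearMap.rTensor P ∘ₗ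
      (TensorProduct.comm R P (M ⊗[R] N)).toLinearMap)
    (h := (TensorProduct.comm R P M).toLinearMap.rTensor N ∘ₗ
      (TensorProduct.assoc R P M N).symm.toLinearMap)
    fun _ _ _ => rfl) _)

lemma map_comp_rTensor_comp {Q S T : Type*} [AddCommMonoid Q] [Module R Q]
    [AddCommMonoid S] [Module R S] [AddCommMonoid T] [Module R T]
    (f : M →ₗ[R] P) (g : N →ₗ[R] Q) (f' : S →ₗ[R] M) (t : T →ₗ[R] S ⊗[R] N) :
    map f g ∘ₗ f'.rTensor N ∘ₗ t = map (f ∘ₗ f') g ∘ₗ t := by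
  rw [← LinearMap.comp_assoc, LinearMap.map_comp_rTensor]

end CommSemiring

lemma map_sub_left {R M N P Q : Type*} [CommRing R] [AddCommGroup M] [Module R M]
    [AddCommGroup N] [Module R N] [AddCommGroup P] [Module R P] [AddCommGroup Q] [Module R Q]
    (f₁ f₂ : M →ₗ[R] P) (g : N →ₗ[R] Q) : map (f₁ - f₂) g = map f₁ g - map f₂ g := by
  ext
  simp [sub_tmul]

end TensorProduct

lemma LinearMap.rTensor_comp_map_comp {R M N P Q S T : Type*} [CommSemiring R]
    [AddCommMonoid M] [Module R M] [AddCommMonoid N] [Module R N] [AddCommMonoid P] [Module R P]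
    [AddCommMonoid Q] [Module R Q] [AddCommMonoid S] [Module R S] [AddCommMonoid T] [Module R T]
    (f' : P →ₗ[R] S) (f : M →ₗ[R] P) (g : N →ₗ[R] Q) (t : T →ₗ[R] M ⊗[R] N) :
    f'.rTensor Q ∘ₗ map f g ∘ₗ t = map (f' ∘ₗ f) g ∘ₗ t := by
  rw [← LinearMap.comp_assoc, LinearMap.rTensor_comp_map]

def cycSum (k M : Type*) [Field k] [AddCommGroup M] [Module k M] :
    (M ⊗[k] M) ⊗[k] M →ₗ[k] (M ⊗[k] M) ⊗[k] M :=
  LinearMap.id + cyc k M + cyc k M ∘ₗ cyc k M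

lemma isLieCoalg_iff {k M : Type*} [Field k] [AddCommGroup M] [Module k M]
    (δ : M →ₗ[k] M ⊗[k] M) :
    IsLieCoalg k M δ ↔
      (LinearMap.id + flipT k M) ∘ₗ δ = 0 ∧ cycSum k M ∘ₗ δ.rTensor M ∘ₗ δ = 0 :=
  Iff.rfl

section CyclicSum

variable {k : Type*} [Field k] {D X Y Z T : Type*} [AddCommGroup D] [Module k D]
  [AddCommGroup X] [Module k X] [AddCommGroup Y] [Module k Y] [AddCommGroup Z] [Module k Z]
  [AddCommGroup T] [Module k T]

lemma cyc_comp_map_map (f : X →ₗ[k] D) (g : Y →ₗ[k] D) (h : Z →ₗ[k] D) :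
    cyc k D ∘ₗ map (map f g) h = map (map h f) g ∘ₗ cycHet k X Y Z :=
  ext_threefold fun _ _ _ => rfl

lemma cycSum_comp_cyc : cycSum k D ∘ₗ cyc k D = cycSum k D := by
  have hcyc3 : cyc k D ∘ₗ cyc k D ∘ₗ cyc k D = LinearMap.id := cycHet_comp_cycHet_comp_cycHet
  simp only [cycSum, LinearMap.add_comp, LinearMap.id_comp, LinearMap.comp_assoc, hcyc3]
  abel

lemma cycSum_comp_map_map_comp_cycHet (f : X →ₗ[k] D) (g : Y →ₗ[k] D) (h : Z →ₗ[k] D)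
    (t : T →ₗ[k] (X ⊗[k] Y) ⊗[k] Z) :
    cycSum k D ∘ₗ map (map h f) g ∘ₗ cycHet k X Y Z ∘ₗ t = cycSum k D ∘ₗ map (map f g) h ∘ₗ t := by
  rw [← LinearMap.comp_assoc t, ← cyc_comp_map_map, LinearMap.comp_assoc,
    ← LinearMap.comp_assoc _ (cyc k D), cycSum_comp_cyc]

lemma map_map_comp_cycSum_comp (f : X →ₗ[k] D) (t : T →ₗ[k] (X ⊗[k] X) ⊗[k] X) :
    map (map f f) f ∘ₗ cycSum k X ∘ₗ t = cycSum k D ∘ₗ map (map f f) f ∘ₗ t := by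
  have hcyc : map (map f f) f ∘ₗ cyc k X = cyc k D ∘ₗ map (map f f) f :=
    (cyc_comp_map_map f f f).symm
  simp only [cycSum, ← LinearMap.comp_assoc, LinearMap.comp_add, LinearMap.add_comp, hcyc]
  simp only [LinearMap.comp_assoc, hcyc, LinearMap.comp_id, LinearMap.id_comp]

lemma flipT_comp_map_comp (f : X →ₗ[k] D) (g : Y →ₗ[k] D) (t : T →ₗ[k] X ⊗[k] Y) :
    flipT k D ∘ₗ map f g ∘ₗ t = map g f ∘ₗ (TensorProduct.comm k X Y).toLinearMap ∘ₗ t := by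
  rw [← LinearMap.comp_assoc, ← LinearMap.comp_assoc]
  congr 1
  exact TensorProduct.ext' fun _ _ => rfl

end CyclicSum

namespace DoubleCrossCosum

section Components

variable {R : Type*} [CommRing R] {A H D T : Type*}
  [AddCommGroup A] [Module R A] [AddCommGroup H] [Module R H] [AddCommGroup D] [Module R D]
  [AddCommGroup T] [Module R T]

def ofComponents (i : A →ₗ[R] D) (j : H →ₗ[R] D) (p : T →ₗ[R] A ⊗[R] A)
    (q : T →ₗ[R] H ⊗[R] A) (r : T →ₗ[R] H ⊗[R] H) : T →ₗ[R] D ⊗[R] D :=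
  map i i ∘ₗ p + map j j ∘ₗ r + map j i ∘ₗ q -
    map i j ∘ₗ (TensorProduct.comm R H A).toLinearMap ∘ₗ q

variable (δA : A →ₗ[R] A ⊗[R] A) (δH : H →ₗ[R] H ⊗[R] H)
  (φ : A →ₗ[R] H ⊗[R] A) (ψ : H →ₗ[R] H ⊗[R] A)

-- The mixed parts of the co-Jacobiator of the cobracket of `A × H` on `ofComponents i j p q r`,
-- after the patterns `A H A`, `A A H` (resp. `H A H`, `A H H`) have been rotated into `H A A`
-- (resp. `H H A`) by `cycHet`.
def coJacobiHAA (p : T →ₗ[R] A ⊗[R] A) (q : T →ₗ[R] H ⊗[R] A) :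
    T →ₗ[R] (H ⊗[R] A) ⊗[R] A :=
  φ.rTensor A ∘ₗ p + ψ.rTensor A ∘ₗ q -
    cycHet R A A H ∘ₗ cycHet R A H A ∘ₗ
      ((TensorProduct.comm R H A).toLinearMap ∘ₗ φ).rTensor A ∘ₗ p -
    cycHet R A A H ∘ₗ cycHet R A H A ∘ₗ
      ((TensorProduct.comm R H A).toLinearMap ∘ₗ ψ).rTensor A ∘ₗ q -
    cycHet R A A H ∘ₗ δA.rTensor H ∘ₗ (TensorProduct.comm R H A).toLinearMap ∘ₗ q

def coJacobiHHA (q : T →ₗ[R] H ⊗[R] A) (r : T →ₗ[R] H ⊗[R] H) :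
    T →ₗ[R] (H ⊗[R] H) ⊗[R] A :=
  δH.rTensor A ∘ₗ q + cycHet R H A H ∘ₗ ψ.rTensor H ∘ₗ r -
    cycHet R H A H ∘ₗ cycHet R A H H ∘ₗ
      ((TensorProduct.comm R H A).toLinearMap ∘ₗ ψ).rTensor H ∘ₗ r -
    cycHet R H A H ∘ₗ φ.rTensor H ∘ₗ (TensorProduct.comm R H A).toLinearMap ∘ₗ q +
    cycHet R H A H ∘ₗ cycHet R A H H ∘ₗ
      ((TensorProduct.comm R H A).toLinearMap ∘ₗ φ).rTensor H ∘ₗ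
        (TensorProduct.comm R H A).toLinearMap ∘ₗ q

lemma coJacobiHAA_eq_zero_of_comatched
    (hδA : (LinearMap.id + (TensorProduct.comm R A A).toLinearMap) ∘ₗ δA = 0)
    (hCM1 : (δA.lTensor H) ∘ₗ φ =
      (TensorProduct.assoc R H A A).toLinearMap ∘ₗ (φ.rTensor A) ∘ₗ δA +
      (TensorProduct.assoc R H A A).toLinearMap ∘ₗ
        ((TensorProduct.comm R A H).toLinearMap.rTensor A) ∘ₗ
        (TensorProduct.assoc R A H A).symm.toLinearMap ∘ₗ (φ.lTensor A) ∘ₗ δA +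
      (TensorProduct.assoc R H A A).toLinearMap ∘ₗ (ψ.rTensor A) ∘ₗ φ -
      ((TensorProduct.comm R A A).toLinearMap.lTensor H) ∘ₗ
        (TensorProduct.assoc R H A A).toLinearMap ∘ₗ (ψ.rTensor A) ∘ₗ φ) :
    coJacobiHAA δA φ ψ δA φ = 0 := by
  ext x
  have hx : δA x = -TensorProduct.comm R A A (δA x) :=
    eq_neg_of_add_eq_zero_left congr($hδA x)
  have hφδ : cycHet R A A H (cycHet R A H A
      (((TensorProduct.comm R H A).toLinearMap ∘ₗ φ).rTensor A (δA x))) =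
      -(TensorProduct.comm R A H).toLinearMap.rTensor A
        ((TensorProduct.assoc R A H A).symm (φ.lTensor A (δA x))) := by
    conv_lhs => rw [hx]
    rw [map_neg, map_neg, map_neg, LinearMap.rTensor_comp_apply,
      cycHet_cycHet_rTensor_comm_rTensor_comm]
  have hCM1x := congr($hCM1 x)
  simp only [LinearMap.sub_apply, LinearMap.add_apply, LinearMap.comp_apply,
    LinearEquiv.coe_coe] at hCM1x
  apply (TensorProduct.assoc R H A A).injective
  simp only [coJacobiHAA, LinearMap.sub_apply, LinearMap.add_apply, LinearMap.comp_apply]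
  rw [hφδ]
  simp only [LinearMap.rTensor_comp_apply, LinearEquiv.coe_coe, cycHet_rTensor_comm,
    cycHet_cycHet_rTensor_comm, map_sub, map_add, map_neg, map_zero, LinearEquiv.apply_symm_apply,
    LinearMap.zero_apply, hCM1x]
  abel

lemma coJacobiHAA_eq_zero_of_rightComodule
    (hψ : (δA.lTensor H) ∘ₗ ψ =
      (TensorProduct.assoc R H A A).toLinearMap ∘ₗ (ψ.rTensor A) ∘ₗ ψ -
      ((TensorProduct.comm R A A).toLinearMap.lTensor H) ∘ₗ
        (TensorProduct.assoc R H A A).toLinearMap ∘ₗ (ψ.rTensor A) ∘ₗ ψ) :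
    coJacobiHAA δA φ ψ 0 ψ = 0 := by
  ext x
  have hψx := congr($hψ x)
  simp only [LinearMap.sub_apply, LinearMap.comp_apply, LinearEquiv.coe_coe] at hψx
  apply (TensorProduct.assoc R H A A).injective
  simp only [coJacobiHAA, LinearMap.sub_apply, LinearMap.add_apply, LinearMap.comp_apply,
    LinearMap.zero_apply, LinearMap.rTensor_comp_apply, LinearEquiv.coe_coe, cycHet_rTensor_comm,
    cycHet_cycHet_rTensor_comm, map_sub, map_add, map_zero, LinearEquiv.apply_symm_apply, hψx]
  abel

lemma coJacobiHHA_eq_zero_of_leftComodule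
    (hφ : (δH.rTensor A) ∘ₗ φ =
      (TensorProduct.assoc R H H A).symm.toLinearMap ∘ₗ (φ.lTensor H) ∘ₗ φ -
      ((TensorProduct.comm R H H).toLinearMap.rTensor A) ∘ₗ
        (TensorProduct.assoc R H H A).symm.toLinearMap ∘ₗ (φ.lTensor H) ∘ₗ φ) :
    coJacobiHHA δH φ ψ φ 0 = 0 := by
  ext x
  have hφx := congr($hφ x)
  simp only [LinearMap.sub_apply, LinearMap.comp_apply, LinearEquiv.coe_coe] at hφx
  simp only [coJacobiHHA, LinearMap.sub_apply, LinearMap.add_apply, LinearMap.comp_apply,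
    LinearMap.zero_apply, LinearMap.rTensor_comp_apply, LinearEquiv.coe_coe, cycHet_rTensor_comm,
    cycHet_cycHet_rTensor_comm_rTensor_comm, map_zero, hφx]
  abel

lemma coJacobiHHA_eq_zero_of_comatched
    (hδH : (LinearMap.id + (TensorProduct.comm R H H).toLinearMap) ∘ₗ δH = 0)
    (hCM2 : (δH.rTensor A) ∘ₗ ψ =
      (TensorProduct.assoc R H H A).symm.toLinearMap ∘ₗ (ψ.lTensor H) ∘ₗ δH +
      (TensorProduct.assoc R H H A).symm.toLinearMap ∘ₗ
        ((TensorProduct.comm R A H).toLinearMap.lTensor H) ∘ₗ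
        (TensorProduct.assoc R H A H).toLinearMap ∘ₗ (ψ.rTensor H) ∘ₗ δH +
      (TensorProduct.assoc R H H A).symm.toLinearMap ∘ₗ (φ.lTensor H) ∘ₗ ψ -
      ((TensorProduct.comm R H H).toLinearMap.rTensor A) ∘ₗ
        (TensorProduct.assoc R H H A).symm.toLinearMap ∘ₗ (φ.lTensor H) ∘ₗ ψ) :
    coJacobiHHA δH φ ψ ψ δH = 0 := by
  ext x
  have hx : δH x = -TensorProduct.comm R H H (δH x) :=
    eq_neg_of_add_eq_zero_left congr($hδH x)
  have hψδ : cycHet R H A H (ψ.rTensor H (δH x)) =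
      -(TensorProduct.assoc R H H A).symm (ψ.lTensor H (δH x)) := by
    conv_lhs => rw [hx]
    rw [map_neg, map_neg, cycHet_rTensor_comm]
  have hCM2x := congr($hCM2 x)
  simp only [LinearMap.sub_apply, LinearMap.add_apply, LinearMap.comp_apply,
    LinearEquiv.coe_coe] at hCM2x
  simp only [coJacobiHHA, LinearMap.sub_apply, LinearMap.add_apply, LinearMap.comp_apply]
  rw [hψδ]
  simp only [LinearMap.rTensor_comp_apply, LinearEquiv.coe_coe, cycHet_rTensor_comm,
    cycHet_cycHet_rTensor_comm_rTensor_comm]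
  simp only [cycHet_cycHet_rTensor_comm, hCM2x]
  abel

end Components

section Assembly

variable {k : Type*} [Field k] {A H D T : Type*} [AddCommGroup A] [Module k A]
  [AddCommGroup H] [Module k H] [AddCommGroup D] [Module k D] [AddCommGroup T] [Module k T]
  (i : A →ₗ[k] D) (j : H →ₗ[k] D)

lemma add_flipT_comp_ofComponents {p : T →ₗ[k] A ⊗[k] A} {r : T →ₗ[k] H ⊗[k] H}
    (hp : (LinearMap.id + flipT k A) ∘ₗ p = 0) (hr : (LinearMap.id + flipT k H) ∘ₗ r = 0)
    (q : T →ₗ[k] H ⊗[k] A) :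
    (LinearMap.id + flipT k D) ∘ₗ ofComponents i j p q r = 0 := by
  have hcomm : (TensorProduct.comm k A H).toLinearMap ∘ₗ (TensorProduct.comm k H A).toLinearMap ∘ₗ q
      = q := by
    rw [← LinearMap.comp_assoc, ← LinearEquiv.coe_trans, TensorProduct.comm_trans_comm,
      LinearEquiv.refl_toLinearMap, LinearMap.id_comp]
  calc (LinearMap.id + flipT k D) ∘ₗ ofComponents i j p q r
      = map i i ∘ₗ (LinearMap.id + flipT k A) ∘ₗ p +
          map j j ∘ₗ (LinearMap.id + flipT k H) ∘ₗ r := by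
        simp only [ofComponents, LinearMap.add_comp, LinearMap.id_comp, LinearMap.comp_add,
          LinearMap.comp_sub, flipT_comp_map_comp, hcomm]
        simp only [flipT]
        abel
    _ = 0 := by rw [hp, hr, LinearMap.comp_zero, LinearMap.comp_zero, add_zero]

theorem cycSum_comp_rTensor_comp_ofComponents {δD : D →ₗ[k] D ⊗[k] D} {δA : A →ₗ[k] A ⊗[k] A}
    {δH : H →ₗ[k] H ⊗[k] H} {φ : A →ₗ[k] H ⊗[k] A} {ψ : H →ₗ[k] H ⊗[k] A}
    (hi : δD ∘ₗ i = ofComponents i j δA φ 0) (hj : δD ∘ₗ j = ofComponents i j 0 ψ δH)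
    (p : T →ₗ[k] A ⊗[k] A) (q : T →ₗ[k] H ⊗[k] A) (r : T →ₗ[k] H ⊗[k] H) :
    cycSum k D ∘ₗ δD.rTensor D ∘ₗ ofComponents i j p q r =
      map (map i i) i ∘ₗ cycSum k A ∘ₗ δA.rTensor A ∘ₗ p +
      map (map j j) j ∘ₗ cycSum k H ∘ₗ δH.rTensor H ∘ₗ r +
      cycSum k D ∘ₗ map (map j i) i ∘ₗ coJacobiHAA δA φ ψ p q +
      cycSum k D ∘ₗ map (map j j) i ∘ₗ coJacobiHHA δH φ ψ q r := by
  simp only [ofComponents, coJacobiHAA, coJacobiHHA, LinearMap.comp_add, LinearMap.comp_sub,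
    LinearMap.rTensor_comp_map_comp, hi, hj, map_add_left, map_sub_left, LinearMap.add_comp,
    LinearMap.sub_comp, ← map_comp_rTensor_comp, map_zero_left, LinearMap.zero_comp,
    LinearMap.comp_zero, map_map_comp_cycSum_comp, cycSum_comp_map_map_comp_cycHet]
  abel

end Assembly

end DoubleCrossCosum

open DoubleCrossCosum

/-- The double cross co-sum `A ▶◀ H` of a matched pair of Lie coalgebras is a
Lie coalgebra. -/
theorem stmt2 {k A H : Type*} [Field k]
    [AddCommGroup A] [Module k A] [AddCommGroup H] [Module k H]
    (δA : A →ₗ[k] A ⊗[k] A) (δH : H →ₗ[k] H ⊗[k] H)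
    (φ : A →ₗ[k] H ⊗[k] A) (ψ : H →ₗ[k] H ⊗[k] A)
    (hA : IsLieCoalg k A δA) (hH : IsLieCoalg k H δH)
    -- A is a left H-comodule
    (hφ : (δH.rTensor A) ∘ₗ φ =
      (TensorProduct.assoc k H H A).symm.toLinearMap ∘ₗ (φ.lTensor H) ∘ₗ φ -
      ((TensorProduct.comm k H H).toLinearMap.rTensor A) ∘ₗ
        (TensorProduct.assoc k H H A).symm.toLinearMap ∘ₗ (φ.lTensor H) ∘ₗ φ)
    -- H is a right A-comodule
    (hψ : (δA.lTensor H) ∘ₗ ψ =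
      (TensorProduct.assoc k H A A).toLinearMap ∘ₗ (ψ.rTensor A) ∘ₗ ψ -
      ((flipT k A).lTensor H) ∘ₗ
        (TensorProduct.assoc k H A A).toLinearMap ∘ₗ (ψ.rTensor A) ∘ₗ ψ)
    -- (CM1)
    (hCM1 : (δA.lTensor H) ∘ₗ φ =
      (TensorProduct.assoc k H A A).toLinearMap ∘ₗ (φ.rTensor A) ∘ₗ δA +
      (TensorProduct.assoc k H A A).toLinearMap ∘ₗ
        ((TensorProduct.comm k A H).toLinearMap.rTensor A) ∘ₗ
        (TensorProduct.assoc k A H A).symm.toLinearMap ∘ₗ (φ.lTensor A) ∘ₗ δA +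
      (TensorProduct.assoc k H A A).toLinearMap ∘ₗ (ψ.rTensor A) ∘ₗ φ -
      ((flipT k A).lTensor H) ∘ₗ
        (TensorProduct.assoc k H A A).toLinearMap ∘ₗ (ψ.rTensor A) ∘ₗ φ)
    -- (CM2)
    (hCM2 : (δH.rTensor A) ∘ₗ ψ =
      (TensorProduct.assoc k H H A).symm.toLinearMap ∘ₗ (ψ.lTensor H) ∘ₗ δH +
      (TensorProduct.assoc k H H A).symm.toLinearMap ∘ₗ
        ((TensorProduct.comm k A H).toLinearMap.lTensor H) ∘ₗ
        (TensorProduct.assoc k H A H).toLinearMap ∘ₗ (ψ.rTensor H) ∘ₗ δH +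
      (TensorProduct.assoc k H H A).symm.toLinearMap ∘ₗ (φ.lTensor H) ∘ₗ ψ -
      ((flipT k H).rTensor A) ∘ₗ
        (TensorProduct.assoc k H H A).symm.toLinearMap ∘ₗ (φ.lTensor H) ∘ₗ ψ) :
    ∀ δD : (A × H) →ₗ[k] (A × H) ⊗[k] (A × H),
      (∀ a : A, δD (a, 0) =
        (TensorProduct.map (LinearMap.inl k A H) (LinearMap.inl k A H)) (δA a) +
        (TensorProduct.map (LinearMap.inr k A H) (LinearMap.inl k A H)) (φ a) -
        flipT k (A × H)
          ((TensorProduct.map (LinearMap.inr k A H) (LinearMap.inl k A H)) (φ a))) →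
      (∀ x : H, δD (0, x) =
        (TensorProduct.map (LinearMap.inr k A H) (LinearMap.inr k A H)) (δH x) +
        (TensorProduct.map (LinearMap.inr k A H) (LinearMap.inl k A H)) (ψ x) -
        flipT k (A × H)
          ((TensorProduct.map (LinearMap.inr k A H) (LinearMap.inl k A H)) (ψ x))) →
      IsLieCoalg k (A × H) δD := by
  intro δD h1 h2
  have hi : δD ∘ₗ LinearMap.inl k A H =
      ofComponents (LinearMap.inl k A H) (LinearMap.inr k A H) δA φ 0 :=
    LinearMap.ext fun a => by simp [ofComponents, h1, flipT, map_comm]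
  have hj : δD ∘ₗ LinearMap.inr k A H =
      ofComponents (LinearMap.inl k A H) (LinearMap.inr k A H) 0 ψ δH :=
    LinearMap.ext fun x => by simp [ofComponents, h2, flipT, map_comm]
  rw [isLieCoalg_iff] at hA hH ⊢
  refine ⟨LinearMap.prod_ext ?_ ?_, LinearMap.prod_ext ?_ ?_⟩ <;>
    rw [LinearMap.zero_comp] <;> simp only [LinearMap.comp_assoc, hi, hj]
  · exact add_flipT_comp_ofComponents _ _ hA.1 (LinearMap.comp_zero _) φ
  · exact add_flipT_comp_ofComponents _ _ (LinearMap.comp_zero _) hH.1 ψ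
  · rw [cycSum_comp_rTensor_comp_ofComponents _ _ hi hj, hA.2,
      coJacobiHAA_eq_zero_of_comatched δA φ ψ hA.1 hCM1,
      coJacobiHHA_eq_zero_of_leftComodule δH φ ψ hφ]
    simp
  · rw [cycSum_comp_rTensor_comp_ofComponents _ _ hi hj, hH.2,
      coJacobiHAA_eq_zero_of_rightComodule δA φ ψ hψ,
      coJacobiHHA_eq_zero_of_comatched δH φ ψ hH.1 hCM2]
    simp
end
end

section
/- Let (H, r) be a quasitriangular Lie bialgebra over k, with r = Σ r⁽¹⁾ ⊗ r⁽²⁾, and let A be a Lie algebra and Lie coalgebra that is an H-module Lie algebra and an H-module Lie coalgebra. Define a coaction φ: A → H ⊗ A by φ(a) = Σ r⁽²⁾ ⊗ (r⁽¹⁾ ▷ a). Then (A, ▷, φ) is a Yetter–Drinfeld module over H. -/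
open TensorProduct

noncomputable section

/-- Over a quasitriangular Lie bialgebra `(H, r)`, `r = Σᵢ rl i ⊗ rr i`, the coaction
`φ(a) = Σᵢ rr i ⊗ (rl i ▷ a)` makes an `H`-module Lie algebra and Lie coalgebra `A`
into a Yetter–Drinfeld module over `H`. -/
theorem stmt8 {k A H : Type*} [Field k] {ι : Type*} [Fintype ι]
    [LieRing H] [LieAlgebra k H] [LieRing A] [LieAlgebra k A]
    (δH : H →ₗ[k] H ⊗[k] H) (δA : A →ₗ[k] A ⊗[k] A)
    (rl rr : ι → H)
    -- H is a Lie coalgebra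
    (hHco : IsLieCoalg k H δH)
    -- (H, r) is coboundary : δ(x) = (ad_x ⊗ 1 + 1 ⊗ ad_x)(r)
    (hcob : ∀ x : H, δH x = ∑ i : ι, (⁅x, rl i⁆ ⊗ₜ[k] rr i + rl i ⊗ₜ[k] ⁅x, rr i⁆))
    -- r satisfies the classical Yang–Baxter equation
    (hCYBE : ∑ i : ι, ∑ j : ι,
      ((⁅rl i, rl j⁆ ⊗ₜ[k] rr i) ⊗ₜ[k] rr j
        + (rl i ⊗ₜ[k] ⁅rr i, rl j⁆) ⊗ₜ[k] rr j
        + (rl i ⊗ₜ[k] rl j) ⊗ₜ[k] ⁅rr i, rr j⁆) = (0 : (H ⊗[k] H) ⊗[k] H))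
    -- A is a left H-module
    (act : H →ₗ[k] A →ₗ[k] A)
    (hmod : ∀ (x y : H) (a : A), act ⁅x, y⁆ a = act x (act y a) - act y (act x a))
    -- A is an H-module Lie algebra
    (hactbr : ∀ (x : H) (a b : A), act x ⁅a, b⁆ = ⁅act x a, b⁆ + ⁅a, act x b⁆)
    -- A is a Lie coalgebra and an H-module Lie coalgebra
    (hAco : IsLieCoalg k A δA)
    (hactco : ∀ (x : H) (a : A),
      δA (act x a) = ((act x).rTensor A) (δA a) + ((act x).lTensor A) (δA a))
    -- the coaction φ(a) = Σᵢ rr i ⊗ (rl i ▷ a)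
    (φ : A →ₗ[k] H ⊗[k] A)
    (hφ : ∀ a : A, φ a = ∑ i : ι, rr i ⊗ₜ[k] act (rl i) a) :
    -- conclusion: (A, ▷, φ) is a Yetter–Drinfeld module over H, i.e.
    -- φ is a comodule structure and the YD compatibility holds
    ((∀ a : A, (δH.rTensor A) (φ a) =
        (TensorProduct.assoc k H H A).symm ((φ.lTensor H) (φ a)) -
        ((TensorProduct.comm k H H).toLinearMap.rTensor A)
          ((TensorProduct.assoc k H H A).symm ((φ.lTensor H) (φ a)))) ∧
     (∀ (x : H) (a : A), φ (act x a) =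
        ((LieAlgebra.ad k H x : H →ₗ[k] H).rTensor A) (φ a) +
        ((act x).lTensor H) (φ a) +
        (LinearMap.lTensor H (act.flip a)) (δH x))) := by
  constructor
  · intro a
    have hL := congrArg ((LinearMap.lTensor (H ⊗[k] H) (act.flip a)) ∘ₗ
        (TensorProduct.comm k H (H ⊗[k] H)).toLinearMap ∘ₗ
        (TensorProduct.assoc k H H H).toLinearMap) hCYBE
    simp only [map_sum, map_add, map_zero, LinearMap.comp_apply,
      LinearEquiv.coe_coe, TensorProduct.assoc_tmul, TensorProduct.comm_tmul,
      LinearMap.lTensor_tmul, LinearMap.flip_apply] at hL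
    rw [hφ a]
    simp only [map_sum, LinearMap.rTensor_tmul, LinearMap.lTensor_tmul, hφ, hcob,
      TensorProduct.sum_tmul, TensorProduct.add_tmul, TensorProduct.tmul_sum,
      TensorProduct.assoc_symm_tmul, TensorProduct.comm_tmul, LinearEquiv.coe_coe]
    rw [show (∑ x : ι, ∑ y : ι, (rr y ⊗ₜ[k] rr x) ⊗ₜ[k] (act (rl y)) ((act (rl x)) a))
        = ∑ x : ι, ∑ y : ι, (rr x ⊗ₜ[k] rr y) ⊗ₜ[k] (act (rl x)) ((act (rl y)) a)
      from Finset.sum_comm ..]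
    rw [← sub_eq_zero, ← hL]
    simp only [← Finset.sum_sub_distrib]
    refine Finset.sum_congr rfl fun i _ => Finset.sum_congr rfl fun j _ => ?_
    rw [← TensorProduct.tmul_sub, ← hmod, ← lie_skew (rl i) (rl j), map_neg,
      LinearMap.neg_apply, TensorProduct.tmul_neg]
    abel
  · intro x a
    have hinv := LinearMap.congr_fun hHco.1 x
    simp only [LinearMap.comp_apply, LinearMap.add_apply, LinearMap.id_apply,
      LinearMap.zero_apply, flipT, LinearEquiv.coe_coe, hcob, map_sum, map_add,
      TensorProduct.comm_tmul] at hinv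
    have hZ := congrArg (LinearMap.lTensor H (act.flip a)) hinv
    simp only [map_sum, map_add, map_zero, LinearMap.lTensor_tmul,
      LinearMap.flip_apply] at hZ
    have hZ' : ∑ i : ι, -(⁅x, rl i⁆ ⊗ₜ[k] (act (rr i)) a + rr i ⊗ₜ[k] (act ⁅x, rl i⁆) a +
        (rl i ⊗ₜ[k] (act ⁅x, rr i⁆) a + ⁅x, rr i⁆ ⊗ₜ[k] (act (rl i)) a)) = 0 := by
      rw [Finset.sum_neg_distrib, hZ, neg_zero]
    rw [hφ ((act x) a), hφ a, hcob x]
    simp only [map_sum, map_add, LinearMap.rTensor_tmul, LinearMap.lTensor_tmul,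
      LinearMap.flip_apply, LieAlgebra.ad_apply]
    rw [← sub_eq_zero]
    simp only [← Finset.sum_add_distrib, ← Finset.sum_sub_distrib]
    rw [← hZ']
    refine Finset.sum_congr rfl fun i _ => ?_
    rw [show (act (rl i)) ((act x) a) = (act ⁅rl i, x⁆) a + (act x) ((act (rl i)) a) by
      rw [hmod]; abel]
    rw [← lie_skew x (rl i), map_neg, LinearMap.neg_apply, TensorProduct.tmul_add,
      TensorProduct.tmul_neg]
    abel

end
end
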